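/- Let λ = λ_j(w) for some w ∈ ℕ₀ and 0 ≤ j ≤ ℓ, and let V(λ) denote the complex vector space of ℂ^{ℓ+1}-valued polynomial functions F with u(1−u)F''(u) + (C − uU)F'(u) − (V + λ)F(u) = 0 for all u. Then dim{P ∈ V(λ) : deg P ≤ w} equals the cardinality of the set {w' : 0 ≤ w' ≤ w and λ = λ_{j'}(w') for some 0 ≤ j' ≤ ℓ}. In particular dim V(λ) equals the cardinality of the set {(w',j') : w' ∈ ℕ₀, 0 ≤ j' ≤ ℓ, λ = λ_{j'}(w')}. -/

import Mathlib

open Polynomial Matrix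

noncomputable section

/-- The matrix `C`. -/
def Cmat (β : ℝ) (ℓ : ℕ) : Matrix (Fin (ℓ+1)) (Fin (ℓ+1)) ℂ :=
  Matrix.of fun i j =>
    (if (i : ℕ) = (j : ℕ) then (β : ℂ) + 1 + 2 * (i : ℕ) else 0)
      + (if (i : ℕ) = (j : ℕ) + 1 then ((i : ℕ) : ℂ) else 0)

/-- The matrix `U`. -/
def Umat (α β : ℝ) (ℓ : ℕ) : Matrix (Fin (ℓ+1)) (Fin (ℓ+1)) ℂ :=
  Matrix.of fun i j =>
    if (i : ℕ) = (j : ℕ) then (α : ℂ) + β + ℓ + (i : ℕ) + 2 else 0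

/-- The matrix `V`. -/
def Vmat (α β k : ℝ) (ℓ : ℕ) : Matrix (Fin (ℓ+1)) (Fin (ℓ+1)) ℂ :=
  Matrix.of fun i j =>
    (if (i : ℕ) = (j : ℕ) then ((i : ℕ) : ℂ) * ((α : ℂ) + β + (i : ℕ) - k + 1) else 0)
      - (if (j : ℕ) = (i : ℕ) + 1 then ((ℓ : ℂ) - (i : ℕ)) * ((i : ℕ) + (β : ℂ) - k + 1) else 0)

/-- The eigenvalue `λ_j(w) = −w(w+α+β+ℓ+j+1) − j(α+β−k+1+j)`. -/
def lamEig (α β k : ℝ) (ℓ : ℕ) (w j : ℕ) : ℝ :=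
  -((w : ℝ) * ((w : ℝ) + α + β + ℓ + j + 1)) - (j : ℝ) * (α + β - k + 1 + (j : ℝ))

/-- Componentwise derivative of a vector of polynomials. -/
def vderiv (d : ℕ) : (Fin d → Polynomial ℂ) →ₗ[ℂ] (Fin d → Polynomial ℂ) :=
  LinearMap.pi fun i => (Polynomial.derivative (R := ℂ)).comp (LinearMap.proj i)

/-- The hypergeometric operator `D` acting on `ℂ^{ℓ+1}`-valued polynomials:
`(DF)(u) = u(1−u)F''(u) + (C−uU)F'(u) − V F(u)`. -/
def DlinV (α β k : ℝ) (ℓ : ℕ) :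
    (Fin (ℓ+1) → Polynomial ℂ) →ₗ[ℂ] (Fin (ℓ+1) → Polynomial ℂ) :=
  (((Matrix.scalar (Fin (ℓ+1)) (Polynomial.X * (1 - Polynomial.X))).mulVecLin).restrictScalars ℂ)
      ∘ₗ vderiv (ℓ+1) ∘ₗ vderiv (ℓ+1)
    + ((((Cmat β ℓ).map Polynomial.C
          - Matrix.scalar (Fin (ℓ+1)) Polynomial.X
              * (Umat α β ℓ).map Polynomial.C).mulVecLin).restrictScalars ℂ)
        ∘ₗ vderiv (ℓ+1)
    - (((Vmat α β k ℓ).map Polynomial.C).mulVecLin).restrictScalars ℂ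

/-- The space `V(λ)` of `ℂ^{ℓ+1}`-valued polynomial solutions of
`u(1−u)F'' + (C−uU)F' − (V+λ)F = 0`. -/
def Vlam (α β k : ℝ) (ℓ : ℕ) (lam : ℂ) :
    Submodule ℂ (Fin (ℓ+1) → Polynomial ℂ) :=
  LinearMap.ker (DlinV α β k ℓ - lam • LinearMap.id)

/-!
Write `F = ∑ₘ fₘ uᵐ` with `fₘ ∈ ℂ^{ℓ+1}`. The equation `(D - λ) F = 0` is the recurrence
`Bₘ fₘ₊₁ + Aₘ fₘ = 0`, where `Bₘ = (m + 1)(m + C)` is lower triangular and invertible and `Aₘ` is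
upper triangular with diagonal `λᵢ(m) - λ`. So a solution is determined by `f₀` through
`fₘ = Pₘ f₀` with transfer matrices `Pₘ`, and the solutions of degree `≤ w` correspond to
`ker P_{w+1}`.

As `λᵢ(m)` is strictly decreasing in `i`, `dim ker Aₘ ≤ 1`, and `Aₘ` is invertible unless `λ`
occurs at level `m`; hence `dim ker Pₘ₊₁ ≤ dim ker Pₘ + 1`, with equality of kernels when `λ` does
not occur at level `m`. When `λ = λ_{i₀}(m₀)`, the kernel does grow at `m₀`: the inequality
`λ_{i₀}(m₀) < λᵢ(t)` for `t < m₀` and `i ≤ i₀ + (m₀ - t)` makes the triangular systems met when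
running the recurrence down from a kernel vector of `A_{m₀}` solvable. Finally `λⱼ(w)` is strictly
decreasing in `w`, so `λ` occurs at finitely many levels, which bounds the degree of every solution.
-/

open Module

theorem LinearMap.finrank_ker_comp_le {K V W U : Type*} [Field K] [AddCommGroup V] [Module K V]
    [AddCommGroup W] [Module K W] [AddCommGroup U] [Module K U]
    [FiniteDimensional K V] [FiniteDimensional K W] (f : V →ₗ[K] W) (g : W →ₗ[K] U) :
    finrank K (LinearMap.ker (g ∘ₗ f))
      ≤ finrank K (LinearMap.ker g) + finrank K (LinearMap.ker f) := by
  have h := LinearMap.lift_rank_comap_le (f := f) (LinearMap.ker g)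
  rw [← LinearMap.ker_comp, ← finrank_eq_rank, ← finrank_eq_rank, ← finrank_eq_rank] at h
  simpa only [Cardinal.lift_natCast, ← Nat.cast_add, Nat.cast_le] using h

section UpperTriangular

variable {K : Type*} [Field K]

theorem Matrix.IsUpperTriangular.exists_diag_eq_zero_of_mulVec_eq_zero {n : Type*} [Fintype n]
    [LinearOrder n] {M : Matrix n n K} (hM : M.IsUpperTriangular) {v : n → K}
    (hv : M *ᵥ v = 0) (hv0 : v ≠ 0) :
    ∃ i, v i ≠ 0 ∧ M i i = 0 ∧ ∀ j, i < j → v j = 0 := by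
  classical
  obtain ⟨i₀, hi₀⟩ := Function.ne_iff.mp hv0
  obtain ⟨i, hi, hmax⟩ :=
    (Finset.univ.filter (v · ≠ 0)).exists_max_image id ⟨i₀, by simpa using hi₀⟩
  have hi : v i ≠ 0 := (Finset.mem_filter.mp hi).2
  have habove : ∀ j, i < j → v j = 0 := fun j hij =>
    by_contra fun hj => (hmax j (by simpa using hj)).not_gt hij
  refine ⟨i, hi, ?_, habove⟩
  have hrow : (M *ᵥ v) i = M i i * v i := by
    refine Finset.sum_eq_single i (fun j _ hji => ?_) (by simp)
    rcases lt_or_gt_of_ne hji with h | h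
    · simp [hM h]
    · simp [habove j h]
  rw [hv, Pi.zero_apply, eq_comm, mul_eq_zero] at hrow
  exact hrow.resolve_right hi

def vanishingAbove (K : Type*) [Field K] (n r : ℕ) : Submodule K (Fin n → K) :=
  Submodule.pi {i | r < (i : ℕ)} fun _ => ⊥

variable {n : ℕ} {M : Matrix (Fin n) (Fin n) K}

theorem mem_vanishingAbove {r : ℕ} {x : Fin n → K} :
    x ∈ vanishingAbove K n r ↔ ∀ i : Fin n, r < (i : ℕ) → x i = 0 := by
  simp [vanishingAbove, Submodule.mem_pi]

theorem mem_vanishingAbove_of_mulVec_eq_zero (hM : M.IsUpperTriangular) {r : ℕ}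
    (hdiag : ∀ i : Fin n, r < (i : ℕ) → M i i ≠ 0) {v : Fin n → K} (hv : M *ᵥ v = 0) :
    v ∈ vanishingAbove K n r := by
  rw [mem_vanishingAbove]
  intro i hi
  by_contra hvi
  obtain ⟨i', hvi', hdiag', habove⟩ :=
    hM.exists_diag_eq_zero_of_mulVec_eq_zero hv (Function.ne_iff.mpr ⟨i, hvi⟩)
  rcases lt_or_ge (r : ℕ) i' with h | h
  · exact hdiag i' h hdiag'
  · exact hvi (habove i (by rw [Fin.lt_def]; omega))

theorem finrank_ker_mulVecLin_le_one (hM : M.IsUpperTriangular) (i₀ : Fin n)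
    (hdiag : ∀ i, i ≠ i₀ → M i i ≠ 0) : finrank K (LinearMap.ker M.mulVecLin) ≤ 1 := by
  have hinj : Function.Injective ((LinearMap.proj i₀ : (Fin n → K) →ₗ[K] K) ∘ₗ
      (LinearMap.ker M.mulVecLin).subtype) := by
    rw [← LinearMap.ker_eq_bot, eq_bot_iff]
    rintro ⟨v, hv⟩ hv₀
    rw [LinearMap.mem_ker, Matrix.mulVecLin_apply] at hv
    by_contra hne
    obtain ⟨i, hvi, hdiag', -⟩ := hM.exists_diag_eq_zero_of_mulVec_eq_zero hv
      (fun h => hne (by simp [h]))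
    by_cases hi : i = i₀
    · exact hvi (hi ▸ hv₀)
    · exact hdiag i hi hdiag'
  simpa using LinearMap.finrank_le_finrank_of_injective hinj

theorem vanishingAbove_le_map_mulVecLin (hM : M.IsUpperTriangular) {r : ℕ}
    (hdiag : ∀ i : Fin n, (i : ℕ) ≤ r → M i i ≠ 0) :
    vanishingAbove K n r ≤ (vanishingAbove K n r).map M.mulVecLin := by
  have hmaps : ∀ x ∈ vanishingAbove K n r, M.mulVecLin x ∈ vanishingAbove K n r := by
    intro x hx
    rw [mem_vanishingAbove] at hx ⊢
    intro i hi
    simp only [Matrix.mulVecLin_apply, mulVec, dotProduct]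
    refine Finset.sum_eq_zero fun j _ => ?_
    rcases lt_or_ge (r : ℕ) j with h | h
    · rw [hx j h, mul_zero]
    · rw [hM (show j < i by rw [Fin.lt_def]; omega), zero_mul]
  have hinj : Function.Injective (M.mulVecLin.restrict hmaps) := by
    rw [← LinearMap.ker_eq_bot, eq_bot_iff]
    rintro ⟨x, hx⟩ hMx
    have hMx : M *ᵥ x = 0 := congrArg Subtype.val hMx
    by_contra hne
    obtain ⟨i, hxi, hdiag', -⟩ := hM.exists_diag_eq_zero_of_mulVec_eq_zero hMx
      (fun h => hne (by simp [h]))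
    rcases lt_or_ge r i with h | h
    · exact hxi (mem_vanishingAbove.mp hx i h)
    · exact hdiag i h hdiag'
  intro b hb
  obtain ⟨x, hx⟩ := LinearMap.injective_iff_surjective.mp hinj ⟨b, hb⟩
  exact ⟨x, x.2, congrArg Subtype.val hx⟩

end UpperTriangular

theorem Nat.count_succ_eq_ncard (p : ℕ → Prop) [DecidablePred p] (w : ℕ) :
    Nat.count p (w + 1) = {m | m ≤ w ∧ p m}.ncard := by
  rw [Nat.count_eq_card_filter_range, ← Set.ncard_coe_finset]
  congr 1
  ext m
  simp

theorem coeff_X_mul_one_sub_X_mul_derivative_derivative {R : Type*} [CommRing R] (p : R[X])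
    (m : ℕ) :
    (X * (1 - X) * derivative (derivative p)).coeff m
      = ((m : R) + 1) * m * p.coeff (m + 1) - m * (m - 1) * p.coeff m := by
  have hq : ∀ t : ℕ,
      (derivative (derivative p)).coeff t = p.coeff (t + 2) * ((t + 2) * (t + 1)) := by
    intro t
    rw [coeff_derivative, coeff_derivative]
    push_cast
    ring
  rw [show X * (1 - X) * derivative (derivative p)
      = X * derivative (derivative p) - X * (X * derivative (derivative p)) by ring]
  rcases m with _ | _ | t
  · simp
  · simp [coeff_X_mul, hq]
    ring
  · simp only [coeff_sub, coeff_X_mul, hq]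
    push_cast
    ring

section CoeffVec

variable {R : Type*} [CommSemiring R] {n : ℕ}

def coeffVec (R : Type*) [Semiring R] (n m : ℕ) : (Fin n → R[X]) →ₗ[R] (Fin n → R) :=
  LinearMap.pi fun i => lcoeff R m ∘ₗ LinearMap.proj i

@[simp]
theorem coeffVec_apply (m : ℕ) (F : Fin n → R[X]) (i : Fin n) :
    coeffVec R n m F i = (F i).coeff m :=
  rfl

theorem eq_of_coeffVec_eq {F G : Fin n → R[X]} (h : ∀ m, coeffVec R n m F = coeffVec R n m G) :
    F = G :=
  funext fun i => Polynomial.ext fun m => congrFun (h m) i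

theorem coeffVec_mulVec_map_C (M : Matrix (Fin n) (Fin n) R) (F : Fin n → R[X]) (m : ℕ) :
    coeffVec R n m (M.map C *ᵥ F) = M *ᵥ coeffVec R n m F := by
  ext i
  simp [mulVec, dotProduct, coeff_C_mul]

def vecDegreeLE (R : Type*) [Semiring R] (n w : ℕ) : Submodule R (Fin n → R[X]) :=
  Submodule.pi Set.univ fun _ => degreeLE R (w : WithBot ℕ)

theorem mem_vecDegreeLE {w : ℕ} {F : Fin n → R[X]} :
    F ∈ vecDegreeLE R n w ↔ ∀ m, w < m → coeffVec R n m F = 0 := by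
  simp only [vecDegreeLE, Submodule.mem_pi, Set.mem_univ, true_implies, mem_degreeLE,
    degree_le_iff_coeff_zero, Nat.cast_lt, funext_iff, coeffVec_apply, Pi.zero_apply]
  exact ⟨fun h m hm i => h i m hm, fun h i m hm => h m hm i⟩

theorem exists_mem_vecDegreeLE (F : Fin n → R[X]) : ∃ w, F ∈ vecDegreeLE R n w :=
  ⟨Finset.univ.sup fun i => (F i).natDegree, mem_vecDegreeLE.mpr fun _ hm => funext fun i =>
    coeff_eq_zero_of_natDegree_lt ((Finset.le_sup (f := fun i => (F i).natDegree)
      (Finset.mem_univ i)).trans_lt hm)⟩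

theorem exists_mem_vecDegreeLE_coeffVec_eq {w : ℕ} (c : ℕ → Fin n → R)
    (hc : ∀ m, w < m → c m = 0) :
    ∃ F ∈ vecDegreeLE R n w, ∀ m, coeffVec R n m F = c m := by
  have hF : ∀ m,
      coeffVec R n m (fun i => ∑ t ∈ Finset.range (w + 1), monomial t (c t i)) = c m := by
    intro m
    ext i
    simp only [coeffVec_apply, finsetSum_coeff, coeff_monomial, Finset.sum_ite_eq',
      Finset.mem_range]
    split_ifs with h
    · rfl
    · exact (congrFun (hc m (by omega)) i).symm
  exact ⟨_, mem_vecDegreeLE.mpr fun m hm => (hF m).trans (hc m hm), hF⟩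

end CoeffVec

section ComplexCoeffVec

variable {n : ℕ}

@[simp]
theorem vderiv_apply (F : Fin n → ℂ[X]) (i : Fin n) : vderiv n F i = derivative (F i) :=
  rfl

theorem coeffVec_vderiv (F : Fin n → ℂ[X]) (m : ℕ) :
    coeffVec ℂ n m (vderiv n F) = ((m : ℂ) + 1) • coeffVec ℂ n (m + 1) F := by
  ext i
  simp [coeff_derivative, mul_comm]

theorem coeffVec_scalar_X_mul_mulVec_vderiv (M : Matrix (Fin n) (Fin n) ℂ) (F : Fin n → ℂ[X])
    (m : ℕ) :
    coeffVec ℂ n m ((scalar (Fin n) (X : ℂ[X]) * M.map C) *ᵥ vderiv n F)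
      = (m : ℂ) • (M *ᵥ coeffVec ℂ n m F) := by
  ext i
  rcases m with _ | m
  · simp [scalar, mulVec, dotProduct, mul_assoc]
  · simp [scalar, mulVec, dotProduct, mul_assoc, coeff_X_mul, coeff_C_mul, coeff_derivative,
      Finset.mul_sum]
    exact Finset.sum_congr rfl fun _ _ => by ring

end ComplexCoeffVec

/-- With `fₘ = coeffVec m F`, the `m`-th coefficient of `(D - λ) F` is
`recB m fₘ₊₁ + recA λ m fₘ`. -/
def recB (β : ℝ) (ℓ m : ℕ) : Matrix (Fin (ℓ + 1)) (Fin (ℓ + 1)) ℂ :=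
  ((m : ℂ) + 1) • ((m : ℂ) • 1 + Cmat β ℓ)

def recA (α β k : ℝ) (ℓ : ℕ) (lam : ℂ) (m : ℕ) : Matrix (Fin (ℓ + 1)) (Fin (ℓ + 1)) ℂ :=
  -(((m : ℂ) * ((m : ℂ) - 1)) • 1 + (m : ℂ) • Umat α β ℓ + Vmat α β k ℓ) - lam • 1

section Recurrence

variable {α β k : ℝ} {ℓ : ℕ}

theorem coeffVec_DlinV_sub_smul (lam : ℂ) (F : Fin (ℓ + 1) → ℂ[X]) (m : ℕ) :
    coeffVec ℂ (ℓ + 1) m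
        ((DlinV α β k ℓ - lam • LinearMap.id : (Fin (ℓ + 1) → ℂ[X]) →ₗ[ℂ] _) F)
      = recB β ℓ m *ᵥ coeffVec ℂ (ℓ + 1) (m + 1) F
        + recA α β k ℓ lam m *ᵥ coeffVec ℂ (ℓ + 1) m F := by
  have hX : coeffVec ℂ (ℓ + 1) m (scalar (Fin (ℓ + 1)) (X * (1 - X)) *ᵥ
      vderiv (ℓ + 1) (vderiv (ℓ + 1) F))
      = (((m : ℂ) + 1) * m) • coeffVec ℂ (ℓ + 1) (m + 1) F
        - ((m : ℂ) * (m - 1)) • coeffVec ℂ (ℓ + 1) m F := by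
    ext i
    simp [scalar, mulVec_diagonal, coeff_X_mul_one_sub_X_mul_derivative_derivative]
  simp only [DlinV, LinearMap.sub_apply, LinearMap.add_apply, LinearMap.comp_apply,
    LinearMap.restrictScalars_apply, Matrix.mulVecLin_apply, LinearMap.smul_apply,
    LinearMap.id_apply, sub_mulVec, map_sub, map_add, map_smul, hX, coeffVec_mulVec_map_C,
    coeffVec_scalar_X_mul_mulVec_vderiv, coeffVec_vderiv, recB, recA, mulVec_smul, smul_mulVec,
    add_mulVec, neg_mulVec, one_mulVec]
  ext i
  simp only [Pi.add_apply, Pi.sub_apply, Pi.neg_apply, Pi.smul_apply, smul_eq_mul]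
  ring

end Recurrence

section Eigenvalues

variable {α β k : ℝ} {ℓ : ℕ}

theorem lamEig_strictAnti (hα : -1 < α) (hk1 : k < β + 1) (w : ℕ) :
    StrictAnti (lamEig α β k ℓ w) :=
  strictAnti_nat_of_succ_lt fun j => by
    simp only [lamEig]
    push_cast
    nlinarith [(Nat.cast_nonneg w : (0 : ℝ) ≤ w), (Nat.cast_nonneg j : (0 : ℝ) ≤ j)]

theorem lamEig_lt_of_lt (hα : -1 < α) (hk0 : 0 < k) (hk1 : k < β + 1)
    {t m i j : ℕ} (ht : t < m) (hi : i ≤ ℓ) (hij : i ≤ j + (m - t)) :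
    lamEig α β k ℓ m j < lamEig α β k ℓ t i := by
  have htm : (t : ℝ) + 1 ≤ m := by exact_mod_cast ht
  have hiℓ : (i : ℝ) ≤ ℓ := by exact_mod_cast hi
  have hij' : (i : ℝ) - j ≤ m - t := by
    have : ((i : ℕ) : ℝ) ≤ ((j + (m - t) : ℕ) : ℝ) := by exact_mod_cast hij
    push_cast [Nat.cast_sub ht.le] at this
    linarith
  have ht0 : (0 : ℝ) ≤ t := Nat.cast_nonneg t
  have hi0 : (0 : ℝ) ≤ i := Nat.cast_nonneg i
  have hj0 : (0 : ℝ) ≤ j := Nat.cast_nonneg j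
  set A : ℝ := m + t + j + α + β + ℓ + 1
  set B : ℝ := t + i + j + α + β + 1 - k
  have hdiff : lamEig α β k ℓ t i - lamEig α β k ℓ m j = (m - t) * A - (i - j) * B := by
    simp only [lamEig, A, B]
    ring
  have hA : 0 < (m - t) * A := mul_pos (by linarith) (by linarith)
  have hBA : B < A := by linarith
  rw [← sub_pos, hdiff]
  rcases lt_or_ge i j with hlt | hle
  · have hj1 : (i : ℝ) + 1 ≤ j := by exact_mod_cast hlt
    nlinarith [mul_pos (by linarith : (0 : ℝ) < j - i) (by linarith : 0 < B)]
  · have hle' : (j : ℝ) ≤ i := by exact_mod_cast hle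
    rcases le_or_gt B 0 with hB | hB
    · nlinarith [mul_nonneg (by linarith : (0 : ℝ) ≤ i - j) (by linarith : (0 : ℝ) ≤ -B)]
    · nlinarith [mul_le_mul_of_nonneg_right hij' hB.le,
        mul_lt_mul_of_pos_left hBA (by linarith : (0 : ℝ) < m - t)]

end Eigenvalues

section Matrices

variable {α β k : ℝ} {ℓ : ℕ}

theorem recB_apply_of_ne {m : ℕ} {i j : Fin (ℓ + 1)} (h₁ : (i : ℕ) ≠ j)
    (h₂ : (i : ℕ) ≠ j + 1) : recB β ℓ m i j = 0 := by
  have : i ≠ j := fun h => h₁ (congrArg Fin.val h)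
  simp [recB, Cmat, one_apply, h₁, h₂, this]

theorem isUnit_det_recB (hβ : -1 < β) (m : ℕ) : IsUnit (recB β ℓ m).det := by
  have hlower : (recB β ℓ m).IsLowerTriangular := fun i j hij =>
    recB_apply_of_ne (by simp at hij; omega) (by simp at hij; omega)
  rw [det_of_isLowerTriangular _ hlower, isUnit_iff_ne_zero, Finset.prod_ne_zero_iff]
  intro i _
  have hpos : (0 : ℝ) < m + (β + 1 + 2 * (i : ℕ)) := by
    have : (0 : ℝ) ≤ m + 2 * (i : ℕ) := by positivity
    linarith
  have hdiag : recB β ℓ m i i = ((m : ℂ) + 1) * (((m + (β + 1 + 2 * (i : ℕ)) : ℝ)) : ℂ) := by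
    simp [recB, Cmat]
  rw [hdiag]
  exact mul_ne_zero (by exact_mod_cast Nat.succ_ne_zero m) (by exact_mod_cast hpos.ne')

theorem recB_mulVec_mem_vanishingAbove (m : ℕ) {r : ℕ} {y : Fin (ℓ + 1) → ℂ}
    (hy : y ∈ vanishingAbove ℂ (ℓ + 1) r) :
    recB β ℓ m *ᵥ y ∈ vanishingAbove ℂ (ℓ + 1) (r + 1) := by
  rw [mem_vanishingAbove] at hy ⊢
  intro i hi
  simp only [mulVec, dotProduct]
  refine Finset.sum_eq_zero fun j _ => ?_
  by_cases hj : r < (j : ℕ)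
  · rw [hy j hj, mul_zero]
  · rw [recB_apply_of_ne (by omega) (by omega), zero_mul]

theorem recA_isUpperTriangular (lam : ℂ) (m : ℕ) :
    (recA α β k ℓ lam m).IsUpperTriangular := by
  intro i j hij
  have hij : (j : ℕ) < i := hij
  have h₁ : (i : ℕ) ≠ j := by omega
  have h₂ : (j : ℕ) ≠ i + 1 := by omega
  have : i ≠ j := fun h => h₁ (congrArg Fin.val h)
  simp [recA, Umat, Vmat, one_apply, h₁, h₂, this]

theorem recA_apply_self (lam : ℂ) (m : ℕ) (i : Fin (ℓ + 1)) :
    recA α β k ℓ lam m i i = lamEig α β k ℓ m i - lam := by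
  simp [recA, Umat, Vmat, lamEig]
  ring

theorem det_recA (lam : ℂ) (m : ℕ) :
    (recA α β k ℓ lam m).det = ∏ i : Fin (ℓ + 1), ((lamEig α β k ℓ m i : ℂ) - lam) := by
  rw [det_of_isUpperTriangular (recA_isUpperTriangular lam m)]
  exact Finset.prod_congr rfl fun i _ => recA_apply_self lam m i

end Matrices

/-- The recurrence solved for `fₘ₊₁`; `recB m` is invertible when `β > -1`. -/
def transfer (α β k : ℝ) (ℓ : ℕ) (lam : ℂ) (m : ℕ) : Matrix (Fin (ℓ + 1)) (Fin (ℓ + 1)) ℂ :=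
  -((recB β ℓ m)⁻¹ * recA α β k ℓ lam m)

def transferProd (α β k : ℝ) (ℓ : ℕ) (lam : ℂ) : ℕ → Matrix (Fin (ℓ + 1)) (Fin (ℓ + 1)) ℂ
  | 0 => 1
  | m + 1 => transfer α β k ℓ lam m * transferProd α β k ℓ lam m

section Transfer

variable {α β k : ℝ} {ℓ : ℕ}

theorem transfer_mulVec_eq_iff (hβ : -1 < β) {lam : ℂ} {m : ℕ} {f f' : Fin (ℓ + 1) → ℂ} :
    transfer α β k ℓ lam m *ᵥ f = f' ↔ recB β ℓ m *ᵥ f' + recA α β k ℓ lam m *ᵥ f = 0 := by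
  have hB := isUnit_det_recB (ℓ := ℓ) hβ m
  rw [add_eq_zero_iff_eq_neg, transfer, neg_mulVec, ← mulVec_mulVec]
  constructor
  · rintro rfl
    rw [mulVec_neg, mulVec_mulVec, mul_nonsing_inv _ hB, one_mulVec]
  · intro h
    rw [← mulVec_neg, ← h, mulVec_mulVec, nonsing_inv_mul _ hB, one_mulVec]

theorem ker_transfer (hβ : -1 < β) (lam : ℂ) (m : ℕ) :
    LinearMap.ker (transfer α β k ℓ lam m).mulVecLin
      = LinearMap.ker (recA α β k ℓ lam m).mulVecLin := by
  ext v
  simp only [LinearMap.mem_ker, mulVecLin_apply]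
  rw [transfer_mulVec_eq_iff hβ, mulVec_zero, zero_add]

theorem mem_Vlam_iff (hβ : -1 < β) {lam : ℂ} {F : Fin (ℓ + 1) → ℂ[X]} :
    F ∈ Vlam α β k ℓ lam ↔
      ∀ m, transfer α β k ℓ lam m *ᵥ coeffVec ℂ (ℓ + 1) m F = coeffVec ℂ (ℓ + 1) (m + 1) F := by
  simp only [transfer_mulVec_eq_iff hβ, ← coeffVec_DlinV_sub_smul]
  rw [Vlam, LinearMap.mem_ker]
  exact ⟨fun h m => by rw [h, map_zero],
    fun h => eq_of_coeffVec_eq fun m => by rw [h, map_zero]⟩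

theorem coeffVec_eq_transferProd_mulVec (hβ : -1 < β) {lam : ℂ} {F : Fin (ℓ + 1) → ℂ[X]}
    (hF : F ∈ Vlam α β k ℓ lam) (m : ℕ) :
    coeffVec ℂ (ℓ + 1) m F = transferProd α β k ℓ lam m *ᵥ coeffVec ℂ (ℓ + 1) 0 F := by
  induction m with
  | zero => rw [transferProd, one_mulVec]
  | succ m ih => rw [← (mem_Vlam_iff hβ).mp hF m, ih, transferProd, mulVec_mulVec]

theorem ker_transferProd_mono (lam : ℂ) :
    Monotone fun t => LinearMap.ker (transferProd α β k ℓ lam t).mulVecLin :=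
  monotone_nat_of_le_succ fun t x hx => by
    simp only [LinearMap.mem_ker, mulVecLin_apply, transferProd] at hx ⊢
    rw [← mulVec_mulVec, hx, mulVec_zero]

theorem finrank_Vlam_inf_vecDegreeLE (hβ : -1 < β) (lam : ℂ) (w : ℕ) :
    finrank ℂ ↥(Vlam α β k ℓ lam ⊓ vecDegreeLE ℂ (ℓ + 1) w)
      = finrank ℂ ↥(LinearMap.ker (transferProd α β k ℓ lam (w + 1)).mulVecLin) := by
  set S := Vlam α β k ℓ lam ⊓ vecDegreeLE ℂ (ℓ + 1) w
  let f := coeffVec ℂ (ℓ + 1) 0 ∘ₗ S.subtype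
  have hcoeff : ∀ (F : S) m, coeffVec ℂ (ℓ + 1) m F = transferProd α β k ℓ lam m *ᵥ f F :=
    fun F => coeffVec_eq_transferProd_mulVec hβ F.2.1
  have hinj : Function.Injective f := fun F G h =>
    Subtype.ext (eq_of_coeffVec_eq fun m => by rw [hcoeff, hcoeff, h])
  have hrange :
      LinearMap.range f = LinearMap.ker (transferProd α β k ℓ lam (w + 1)).mulVecLin := by
    apply le_antisymm
    · rintro _ ⟨F, rfl⟩
      rw [LinearMap.mem_ker, mulVecLin_apply, ← hcoeff]
      exact mem_vecDegreeLE.mp F.2.2 _ (by omega)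
    · intro x hx
      have hzero : ∀ m, w < m → transferProd α β k ℓ lam m *ᵥ x = 0 := fun m hm =>
        ker_transferProd_mono lam (Nat.succ_le_of_lt hm) hx
      obtain ⟨F, hFdeg, hFcoeff⟩ := exists_mem_vecDegreeLE_coeffVec_eq _ hzero
      have hFsol : F ∈ Vlam α β k ℓ lam := (mem_Vlam_iff hβ).mpr fun m => by
        rw [hFcoeff, hFcoeff, transferProd, mulVec_mulVec]
      exact ⟨⟨F, hFsol, hFdeg⟩, by simp [f, hFcoeff, transferProd]⟩
  rw [← hrange, LinearMap.finrank_range_of_inj hinj]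

end Transfer

section Count

variable {α β k : ℝ} {ℓ : ℕ}

theorem ker_recA_eq_bot {c : ℝ} {m : ℕ} (h : ∀ i : Fin (ℓ + 1), lamEig α β k ℓ m i ≠ c) :
    LinearMap.ker (recA α β k ℓ c m).mulVecLin = ⊥ := by
  have hdet : (recA α β k ℓ c m).det ≠ 0 := by
    rw [det_recA, Finset.prod_ne_zero_iff]
    exact fun i _ => sub_ne_zero.mpr (by exact_mod_cast h i)
  exact LinearMap.ker_eq_bot.mpr (mulVec_injective_iff_isUnit.mpr
    ((isUnit_iff_isUnit_det _).mpr (isUnit_iff_ne_zero.mpr hdet)))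

theorem finrank_ker_recA_le_one (hα : -1 < α) (hk1 : k < β + 1) (c : ℝ) (m : ℕ) :
    finrank ℂ ↥(LinearMap.ker (recA α β k ℓ c m).mulVecLin) ≤ 1 := by
  by_cases h : ∃ i₀ : Fin (ℓ + 1), lamEig α β k ℓ m i₀ = c
  · obtain ⟨i₀, hi₀⟩ := h
    refine finrank_ker_mulVecLin_le_one (recA_isUpperTriangular _ _) i₀ fun i hi => ?_
    rw [recA_apply_self, sub_ne_zero, ← hi₀]
    intro h
    exact hi (Fin.ext ((lamEig_strictAnti hα hk1 m).injective (by exact_mod_cast h)))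
  · simp only [not_exists] at h
    rw [ker_recA_eq_bot h, finrank_bot]
    exact zero_le_one

theorem ker_transferProd_succ (hβ : -1 < β) {c : ℝ} {t : ℕ}
    (h : ∀ i : Fin (ℓ + 1), lamEig α β k ℓ t i ≠ c) :
    LinearMap.ker (transferProd α β k ℓ c (t + 1)).mulVecLin
      = LinearMap.ker (transferProd α β k ℓ c t).mulVecLin := by
  rw [transferProd, mulVecLin_mul,
    LinearMap.ker_comp_of_ker_eq_bot _ ((ker_transfer hβ c t).trans (ker_recA_eq_bot h))]

theorem vanishingAbove_le_map_transfer (hβ : -1 < β) {c : ℝ} {t r : ℕ}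
    (h : ∀ i : Fin (ℓ + 1), (i : ℕ) ≤ r + 1 → lamEig α β k ℓ t i ≠ c) :
    vanishingAbove ℂ (ℓ + 1) r
      ≤ (vanishingAbove ℂ (ℓ + 1) (r + 1)).map (transfer α β k ℓ c t).mulVecLin := by
  intro y hy
  have hdiag : ∀ i : Fin (ℓ + 1), (i : ℕ) ≤ r + 1 → recA α β k ℓ c t i i ≠ 0 := fun i hi => by
    rw [recA_apply_self, sub_ne_zero]
    exact_mod_cast h i hi
  obtain ⟨z, hz, hAz⟩ := vanishingAbove_le_map_mulVecLin (recA_isUpperTriangular _ _) hdiag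
    (Submodule.neg_mem _ (recB_mulVec_mem_vanishingAbove t hy))
  refine ⟨z, hz, (transfer_mulVec_eq_iff hβ).mpr ?_⟩
  rw [mulVecLin_apply] at hAz
  rw [hAz, add_neg_cancel]

theorem vanishingAbove_le_range_transferProd (hα : -1 < α) (hβ : -1 < β) (hk0 : 0 < k)
    (hk1 : k < β + 1) {c : ℝ} {m₀ : ℕ} {i₀ : Fin (ℓ + 1)} (hc : lamEig α β k ℓ m₀ i₀ = c)
    {t : ℕ} (ht : t ≤ m₀) :
    vanishingAbove ℂ (ℓ + 1) (i₀ + (m₀ - t))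
      ≤ LinearMap.range (transferProd α β k ℓ c t).mulVecLin := by
  induction t with
  | zero => simp [transferProd]
  | succ t ih =>
    have hstep := vanishingAbove_le_map_transfer (α := α) (k := k) hβ (c := c) (t := t)
      (r := i₀ + (m₀ - (t + 1))) fun i hi =>
        hc ▸ (lamEig_lt_of_lt hα hk0 hk1 (by omega) (Nat.lt_succ_iff.mp i.isLt) (by omega)).ne'
    rw [show i₀ + (m₀ - (t + 1)) + 1 = i₀ + (m₀ - t) by omega] at hstep
    calc _ ≤ _ := hstep
      _ ≤ (LinearMap.range (transferProd α β k ℓ c t).mulVecLin).map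
            (transfer α β k ℓ c t).mulVecLin := Submodule.map_mono (ih (by omega))
      _ = _ := by rw [transferProd, mulVecLin_mul, LinearMap.range_comp]

theorem exists_transferProd_mulVec_ne_zero (hα : -1 < α) (hβ : -1 < β) (hk0 : 0 < k)
    (hk1 : k < β + 1) {c : ℝ} {m₀ : ℕ} {i₀ : Fin (ℓ + 1)} (hc : lamEig α β k ℓ m₀ i₀ = c) :
    ∃ x, transferProd α β k ℓ c m₀ *ᵥ x ≠ 0 ∧ transferProd α β k ℓ c (m₀ + 1) *ᵥ x = 0 := by
  have hdet : (recA α β k ℓ c m₀).det = 0 := by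
    rw [det_recA]
    exact Finset.prod_eq_zero (Finset.mem_univ i₀) (by rw [hc, sub_self])
  obtain ⟨v, hv0, hv⟩ := exists_mulVec_eq_zero_iff.mpr hdet
  have hvS : v ∈ vanishingAbove ℂ (ℓ + 1) (i₀ + (m₀ - m₀)) := by
    refine mem_vanishingAbove_of_mulVec_eq_zero (recA_isUpperTriangular _ _) (fun i hi => ?_) hv
    rw [recA_apply_self, sub_ne_zero, ← hc]
    exact_mod_cast (lamEig_strictAnti hα hk1 m₀ (by omega)).ne
  obtain ⟨x, hx⟩ := vanishingAbove_le_range_transferProd hα hβ hk0 hk1 hc le_rfl hvS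
  rw [mulVecLin_apply] at hx
  refine ⟨x, hx ▸ hv0, ?_⟩
  rw [transferProd, ← mulVec_mulVec, hx]
  exact (transfer_mulVec_eq_iff hβ).mpr (by rw [mulVec_zero, zero_add, hv])

theorem finrank_ker_transferProd (hα : -1 < α) (hβ : -1 < β) (hk0 : 0 < k) (hk1 : k < β + 1)
    (c : ℝ) (t : ℕ) :
    finrank ℂ ↥(LinearMap.ker (transferProd α β k ℓ c t).mulVecLin)
      = Nat.count (fun m => ∃ i : Fin (ℓ + 1), lamEig α β k ℓ m i = c) t := by
  induction t with
  | zero => rw [transferProd, mulVecLin_one, LinearMap.ker_id, finrank_bot, Nat.count_zero]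
  | succ t ih =>
    rw [Nat.count_succ, ← ih]
    split_ifs with h
    · obtain ⟨i₀, hi₀⟩ := h
      obtain ⟨x, hx0, hx⟩ := exists_transferProd_mulVec_ne_zero hα hβ hk0 hk1 hi₀
      have hlt : LinearMap.ker (transferProd α β k ℓ c t).mulVecLin
          < LinearMap.ker (transferProd α β k ℓ c (t + 1)).mulVecLin := by
        refine lt_of_le_of_ne (ker_transferProd_mono _ t.le_succ) fun heq => hx0 ?_
        have hx' : x ∈ LinearMap.ker (transferProd α β k ℓ c (t + 1)).mulVecLin := hx
        rwa [← heq] at hx'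
      have hle := LinearMap.finrank_ker_comp_le (transferProd α β k ℓ c t).mulVecLin
        (transfer α β k ℓ c t).mulVecLin
      rw [← mulVecLin_mul, ker_transfer hβ] at hle
      have hA := finrank_ker_recA_le_one (ℓ := ℓ) hα hk1 c t
      have hgrow := Submodule.finrank_lt_finrank_of_lt hlt
      rw [transferProd] at hgrow ⊢
      omega
    · simp only [not_exists] at h
      rw [ker_transferProd_succ hβ h, add_zero]

theorem Vlam_le_vecDegreeLE (hβ : -1 < β) {c : ℝ} {w : ℕ}
    (hw : ∀ m (i : Fin (ℓ + 1)), lamEig α β k ℓ m i = c → m ≤ w) :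
    Vlam α β k ℓ c ≤ vecDegreeLE ℂ (ℓ + 1) w := by
  intro F hF
  have hstable : ∀ t, w + 1 ≤ t → LinearMap.ker (transferProd α β k ℓ c t).mulVecLin
      = LinearMap.ker (transferProd α β k ℓ c (w + 1)).mulVecLin := by
    intro t ht
    induction t, ht using Nat.le_induction with
    | base => rfl
    | succ t ht ih => rw [ker_transferProd_succ hβ fun i h => by have := hw t i h; omega, ih]
  obtain ⟨D, hD⟩ := exists_mem_vecDegreeLE F
  have hf0 : coeffVec ℂ (ℓ + 1) 0 F ∈ LinearMap.ker (transferProd α β k ℓ c (w + 1)).mulVecLin := by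
    rw [← hstable (max D w + 1) (by omega), LinearMap.mem_ker, mulVecLin_apply,
      ← coeffVec_eq_transferProd_mulVec hβ hF]
    exact mem_vecDegreeLE.mp hD _ (by omega)
  refine mem_vecDegreeLE.mpr fun m hm => ?_
  rw [coeffVec_eq_transferProd_mulVec hβ hF]
  exact ker_transferProd_mono _ (Nat.succ_le_of_lt hm) hf0

end Count

section Dimension

variable {α β k : ℝ} {ℓ : ℕ}

theorem finite_setOf_lamEig_eq (hα : -1 < α) (hk0 : 0 < k) (hk1 : k < β + 1) (c : ℝ) :
    {p : ℕ × Fin (ℓ + 1) | lamEig α β k ℓ p.1 p.2 = c}.Finite := by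
  refine Set.Finite.of_finite_image (Set.toFinite (Prod.snd '' _)) ?_
  rintro ⟨m, i⟩ (hp : lamEig α β k ℓ m i = c) ⟨m', i'⟩ (hq : lamEig α β k ℓ m' i' = c)
    (rfl : i = i')
  have hi : (i : ℕ) ≤ ℓ := Nat.lt_succ_iff.mp i.isLt
  rcases lt_trichotomy m m' with h | rfl | h
  · exact absurd (hq.trans hp.symm) (lamEig_lt_of_lt hα hk0 hk1 h hi (by omega)).ne
  · rfl
  · exact absurd (hp.trans hq.symm) (lamEig_lt_of_lt hα hk0 hk1 h hi (by omega)).ne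

theorem finrank_Vlam (hα : -1 < α) (hβ : -1 < β) (hk0 : 0 < k) (hk1 : k < β + 1) (c : ℝ) :
    finrank ℂ ↥(Vlam α β k ℓ c) = {p : ℕ × Fin (ℓ + 1) | lamEig α β k ℓ p.1 p.2 = c}.ncard := by
  set S := {p : ℕ × Fin (ℓ + 1) | lamEig α β k ℓ p.1 p.2 = c}
  obtain ⟨w, hw⟩ := ((finite_setOf_lamEig_eq hα hk0 hk1 c).image Prod.fst).bddAbove
  have hw' : ∀ m (i : Fin (ℓ + 1)), lamEig α β k ℓ m i = c → m ≤ w :=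
    fun m i h => hw ⟨(m, i), h, rfl⟩
  have hinj : Set.InjOn Prod.fst S := by
    rintro ⟨m, i⟩ (hp : lamEig α β k ℓ m i = c) ⟨m', i'⟩ (hq : lamEig α β k ℓ m' i' = c)
      (rfl : m = m')
    rw [(Fin.ext ((lamEig_strictAnti hα hk1 m).injective (hp.trans hq.symm)) : i = i')]
  rw [← inf_eq_left.mpr (Vlam_le_vecDegreeLE hβ hw'), finrank_Vlam_inf_vecDegreeLE hβ,
    finrank_ker_transferProd hα hβ hk0 hk1, Nat.count_succ_eq_ncard,
    ← hinj.ncard_image]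
  congr 1
  ext m
  constructor
  · rintro ⟨-, i, hi⟩
    exact ⟨(m, i), hi, rfl⟩
  · rintro ⟨⟨m, i⟩, hi, rfl⟩
    exact ⟨hw' m i hi, i, hi⟩

end Dimension

theorem dim_Vlam_general (α β k : ℝ) (ℓ : ℕ) (hα : -1 < α) (hβ : -1 < β)
    (hk0 : 0 < k) (hk1 : k < β + 1) (w : ℕ) (j : Fin (ℓ+1)) :
    Module.finrank ℂ
        ↥(Vlam α β k ℓ ((lamEig α β k ℓ w j : ℝ) : ℂ)
            ⊓ Submodule.pi Set.univ fun _ : Fin (ℓ+1) =>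
                Polynomial.degreeLE ℂ (w : WithBot ℕ))
        = Set.ncard {w' : ℕ | w' ≤ w
            ∧ ∃ j' : Fin (ℓ+1), lamEig α β k ℓ w' j' = lamEig α β k ℓ w j}
      ∧ Module.finrank ℂ ↥(Vlam α β k ℓ ((lamEig α β k ℓ w j : ℝ) : ℂ))
        = Set.ncard {p : ℕ × Fin (ℓ+1) | lamEig α β k ℓ p.1 p.2 = lamEig α β k ℓ w j} := by
  refine ⟨?_, finrank_Vlam hα hβ hk0 hk1 _⟩
  rw [← vecDegreeLE, finrank_Vlam_inf_vecDegreeLE hβ, finrank_ker_transferProd hα hβ hk0 hk1,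
    Nat.count_succ_eq_ncard]

/-- `dim {P ∈ V(λ) : deg P ≤ w}` equals the number of `w' ≤ w` with `λ = λ_{j'}(w')` for
some `j'`; in particular `dim V(λ)` equals the number of pairs `(w', j')` with
`λ = λ_{j'}(w')`. -/
theorem dim_Vlam (α β k : ℝ) (ℓ : ℕ) (hα : -1 < α) (hβ : -1 < β)
    (hk0 : 0 < k) (hk1 : k < β + 1) (hℓ : 0 < ℓ) (w : ℕ) (j : Fin (ℓ+1)) :
    Module.finrank ℂ
        ↥(Vlam α β k ℓ ((lamEig α β k ℓ w j : ℝ) : ℂ)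
            ⊓ Submodule.pi Set.univ fun _ : Fin (ℓ+1) =>
                Polynomial.degreeLE ℂ (w : WithBot ℕ))
        = Set.ncard {w' : ℕ | w' ≤ w
            ∧ ∃ j' : Fin (ℓ+1), lamEig α β k ℓ w' j' = lamEig α β k ℓ w j}
      ∧ Module.finrank ℂ ↥(Vlam α β k ℓ ((lamEig α β k ℓ w j : ℝ) : ℂ))
        = Set.ncard {p : ℕ × Fin (ℓ+1) | lamEig α β k ℓ p.1 p.2 = lamEig α β k ℓ w j} :=
  dim_Vlam_general α β k ℓ hα hβ hk0 hk1 w j
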